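/- arXiv:1702.05599 — 2 statements merged into one kernel-verified Lean document; each statement's English description precedes it below -/
import Mathlib

section
/- Let F be a centred second-order process on X × Y with separable covariance κ{(x,y),(x',y')} = κ_x(x,x')κ_y(y,y'). Then for any x, x' ∈ X and y, y' ∈ Y with κ{(x',y),(x',y)} > 0, the residual of F(x,y) after projecting onto F(x',y) is uncorrelated with F(x',y'): E[ (F(x,y) − α F(x',y)) F(x',y') ] = 0, where α = κ{(x,y),(x',y)} / κ{(x',y),(x',y)} is the least-squares projection coefficient. -/
/-! By linearity the residual covariance is `κ{(x,y),(x',y')} - α κ{(x',y),(x',y')}`. Under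
separability `α = κx x x' / κx x' x'` (the factor `κy y y` cancels), so the second term is
`κx x x' * κy y y'`, which is the first. -/

open MeasureTheory

theorem integral_sub_const_mul_mul {Ω : Type*} [MeasurableSpace Ω] {μ : Measure Ω}
    {f g h : Ω → ℝ} (hfh : Integrable (fun ω => f ω * h ω) μ)
    (hgh : Integrable (fun ω => g ω * h ω) μ) (c : ℝ) :
    ∫ ω, (f ω - c * g ω) * h ω ∂μ = ∫ ω, f ω * h ω ∂μ - c * ∫ ω, g ω * h ω ∂μ := by
  simp_rw [sub_mul, mul_assoc]
  rw [integral_sub hfh (hgh.const_mul c), integral_const_mul]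

theorem stmt_6_general {Ω : Type*} [MeasurableSpace Ω] (μ : Measure Ω)
    {X Y : Type*} (F : X × Y → Ω → ℝ) (κx : X → X → ℝ) (κy : Y → Y → ℝ)
    (hInt : ∀ p q, Integrable (fun ω => F p ω * F q ω) μ)
    (hsep : ∀ p q, ∫ ω, F p ω * F q ω ∂μ = κx p.1 q.1 * κy p.2 q.2)
    (x x' : X) (y y' : Y)
    (hpos : 0 < ∫ ω, F (x', y) ω * F (x', y) ω ∂μ) :
    ∫ ω, (F (x, y) ω -
        ((∫ ω', F (x, y) ω' * F (x', y) ω' ∂μ) /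
          (∫ ω', F (x', y) ω' * F (x', y) ω' ∂μ)) * F (x', y) ω) * F (x', y') ω ∂μ = 0 := by
  rw [integral_sub_const_mul_mul (hInt _ _) (hInt _ _)]
  simp only [hsep] at hpos ⊢
  have hx : κx x' x' ≠ 0 := left_ne_zero_of_mul hpos.ne'
  have hy : κy y y ≠ 0 := right_ne_zero_of_mul hpos.ne'
  field_simp
  ring

theorem stmt_6 {Ω : Type*} [MeasurableSpace Ω] (μ : Measure Ω) [IsProbabilityMeasure μ]
    {X Y : Type*} (F : X × Y → Ω → ℝ) (κx : X → X → ℝ) (κy : Y → Y → ℝ)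
    (hInt : ∀ p q, Integrable (fun ω => F p ω * F q ω) μ)
    (hmean : ∀ p, ∫ ω, F p ω ∂μ = 0)
    (hsep : ∀ p q, ∫ ω, F p ω * F q ω ∂μ = κx p.1 q.1 * κy p.2 q.2)
    (x x' : X) (y y' : Y)
    (hpos : 0 < ∫ ω, F (x', y) ω * F (x', y) ω ∂μ) :
    ∫ ω, (F (x, y) ω -
        ((∫ ω', F (x, y) ω' * F (x', y) ω' ∂μ) /
          (∫ ω', F (x', y) ω' * F (x', y) ω' ∂μ)) * F (x', y) ω) * F (x', y') ω ∂μ = 0 :=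
  stmt_6_general μ F κx κy hInt hsep x x' y y' hpos
end

section
/- If F is a centred Gaussian process on X × Y with separable covariance function κ{(x,y),(x',y')} = κ_x(x,x')κ_y(y,y'), then for all x,x' ∈ X and y,y' ∈ Y with Var(F(x',y)) > 0, the conditional covariance cov{F(x,y), F(x',y') | F(x',y)} equals 0. -/
open MeasureTheory ProbabilityTheory

/-- For jointly Gaussian `U, V, W` with covariance `k`, this is `cov(U, V | W)` when `k w w > 0`. -/
noncomputable def gaussianCondCov {α : Type*} (k : α → α → ℝ) (u v w : α) : ℝ :=
  k u v - k u w * k v w / k w w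

lemma gaussianCondCov_eq_zero_of_separable {X Y : Type*} {k : X × Y → X × Y → ℝ}
    {kx : X → X → ℝ} {ky : Y → Y → ℝ} (hsymm : ∀ p q, k p q = k q p)
    (hsep : ∀ p q, k p q = kx p.1 q.1 * ky p.2 q.2) (x x' : X) (y y' : Y)
    (hw : k (x', y) (x', y) ≠ 0) :
    gaussianCondCov k (x, y) (x', y') (x', y) = 0 := by
  simp only [gaussianCondCov, hsep] at hw ⊢
  have hkx : kx x' x' ≠ 0 := left_ne_zero_of_mul hw
  have hky : ky y y ≠ 0 := right_ne_zero_of_mul hw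
  -- symmetry of `k` forces symmetry of `ky` once the `X`-factor is nonzero
  have hky_symm : ky y' y = ky y y' := by
    have := hsymm (x', y') (x', y)
    simp only [hsep] at this
    exact mul_left_cancel₀ hkx this
  rw [hky_symm]
  field_simp
  ring

theorem stmt_7_general {Ω : Type*} [MeasurableSpace Ω] (μ : Measure Ω)
    {X Y : Type*} (F : X × Y → Ω → ℝ) (κx : X → X → ℝ) (κy : Y → Y → ℝ)
    (hsep : ∀ p q, ∫ ω, F p ω * F q ω ∂μ = κx p.1 q.1 * κy p.2 q.2)
    (x x' : X) (y y' : Y)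
    (hpos : 0 < ∫ ω, F (x', y) ω * F (x', y) ω ∂μ) :
    (∫ ω, F (x, y) ω * F (x', y') ω ∂μ) -
      (∫ ω, F (x, y) ω * F (x', y) ω ∂μ) *
        (∫ ω, F (x', y') ω * F (x', y) ω ∂μ) /
          (∫ ω, F (x', y) ω * F (x', y) ω ∂μ) = 0 :=
  gaussianCondCov_eq_zero_of_separable (k := fun p q => ∫ ω, F p ω * F q ω ∂μ)
    (fun p q => by simp only [mul_comm]) hsep x x' y y' hpos.ne'

theorem stmt_7 {Ω : Type*} [MeasurableSpace Ω] (μ : Measure Ω) [IsProbabilityMeasure μ]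
    {X Y : Type*} (F : X × Y → Ω → ℝ) (κx : X → X → ℝ) (κy : Y → Y → ℝ)
    (hmeas : ∀ p, Measurable (F p))
    (hGauss : ∀ (n : ℕ) (c : Fin n → ℝ) (p : Fin n → X × Y),
      ∃ (m : ℝ) (v : NNReal),
        μ.map (fun ω => ∑ i, c i * F (p i) ω) = gaussianReal m v)
    (hmean : ∀ p, ∫ ω, F p ω ∂μ = 0)
    (hsep : ∀ p q, ∫ ω, F p ω * F q ω ∂μ = κx p.1 q.1 * κy p.2 q.2)
    (x x' : X) (y y' : Y)
    (hpos : 0 < ∫ ω, F (x', y) ω * F (x', y) ω ∂μ) :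
    (∫ ω, F (x, y) ω * F (x', y') ω ∂μ) -
      (∫ ω, F (x, y) ω * F (x', y) ω ∂μ) *
        (∫ ω, F (x', y') ω * F (x', y) ω ∂μ) /
          (∫ ω, F (x', y) ω * F (x', y) ω ∂μ) = 0 :=
  stmt_7_general μ F κx κy hsep x x' y y' hpos
end
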